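/- Suppose λ1 = n for a natural number n (cast to ℂ in the operators), and let λ2 ∈ ℂ be arbitrary. Then every ℂ-linear subspace of R that contains the monomial x^{n+1} and is invariant under each of the eight operators E1, E2, E12, F1, F2, F12, H1, H2 is equal to all of R; i.e., the s1-twisted Verma module M^{s1}(λ) is generated by the single vector x^{λ1+1}. -/

import Mathlib

open MvPolynomial LieAlgebra.SpecialLinear

noncomputable section

/-- The polynomial algebra `R = ℂ[x,ξ2,ξ3]`
(variable `x` has index `0`, `ξ2` index `1`, `ξ3` index `2`). -/
abbrev R3 : Type := MvPolynomial (Fin 3) ℂ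

/-- Multiplication by the `i`-th variable as a `ℂ`-linear endomorphism of `R`
(`ξ 0` is multiplication by `x`, `ξ 1` by `ξ2`, `ξ 2` by `ξ3`). -/
def ξ (i : Fin 3) : Module.End ℂ R3 := LinearMap.mulLeft ℂ (X i)

/-- The partial derivative with respect to the `i`-th variable as a `ℂ`-linear endomorphism
of `R` (`D 0 = ∂x`, `D 1 = ∂2`, `D 2 = ∂3`). -/
def D (i : Fin 3) : Module.End ℂ R3 := (pderiv i).toLinearMap

/-- `F1 = ξ2∂3 − x(x∂x − (1/2)ξ3∂3 − λ1) − (1/2)x(ξ2 − (1/2)xξ3)∂2`. -/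
def F1 (lam1 : ℂ) : Module.End ℂ R3 :=
  ξ 1 * D 2 - ξ 0 * (ξ 0 * D 0 - (1/2 : ℂ) • (ξ 2 * D 2) - lam1 • 1)
    - (1/2 : ℂ) • (ξ 0 * (ξ 1 - (1/2 : ℂ) • (ξ 0 * ξ 2)) * D 1)

/-- `F2` is multiplication by `ξ3`. -/
def F2 : Module.End ℂ R3 := ξ 2

/-- `F12` is multiplication by `−ξ2 − (1/2)xξ3`. -/
def F12 : Module.End ℂ R3 := -ξ 1 - (1/2 : ℂ) • (ξ 0 * ξ 2)

/-- `E1 = ∂x + (1/2)ξ3∂2`. -/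
def E1 : Module.End ℂ R3 := D 0 + (1/2 : ℂ) • (ξ 2 * D 1)

/-- `E2 = (x∂x − ξ2∂2 − ξ3∂3 + λ2)∂3
      + (1/2)x(x∂x + ξ2∂2 − (1/2)xξ3∂2 − 2λ1 − λ2 − 1)∂2`. -/
def E2 (lam1 lam2 : ℂ) : Module.End ℂ R3 :=
  (ξ 0 * D 0 - ξ 1 * D 1 - ξ 2 * D 2 + lam2 • 1) * D 2
    + (1/2 : ℂ) • (ξ 0 * (ξ 0 * D 0 + ξ 1 * D 1 - (1/2 : ℂ) • (ξ 0 * ξ 2 * D 1)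
        - (2 * lam1 + lam2 + 1) • 1) * D 1)

/-- `E12 = ∂x∂3 + (ξ2∂2 + (1/2)ξ3∂3 − λ1 − λ2 − 1/2)∂2 + (1/2)x(∂x − (1/2)ξ3∂2)∂2`. -/
def E12 (lam1 lam2 : ℂ) : Module.End ℂ R3 :=
  D 0 * D 2 + (ξ 1 * D 1 + (1/2 : ℂ) • (ξ 2 * D 2) - (lam1 + lam2 + 1/2) • 1) * D 1
    + (1/2 : ℂ) • (ξ 0 * (D 0 - (1/2 : ℂ) • (ξ 2 * D 1)) * D 1)

/-- `H1 = −2x∂x − ξ2∂2 + ξ3∂3 + λ1`. -/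
def H1 (lam1 : ℂ) : Module.End ℂ R3 :=
  (-2 : ℂ) • (ξ 0 * D 0) - ξ 1 * D 1 + ξ 2 * D 2 + lam1 • 1

/-- `H2 = x∂x − ξ2∂2 − 2ξ3∂3 + λ2`. -/
def H2 (lam2 : ℂ) : Module.End ℂ R3 :=
  ξ 0 * D 0 - ξ 1 * D 1 + (-2 : ℂ) • (ξ 2 * D 2) + lam2 • 1

/- On `ℂ[x]` we have `E1 x^(a+1) = (a+1) x^a` and `F1 x^a = (n - a) x^(a+1)`, which vanishes
only at `a = n`; so from `x^(n+1)` these two operators produce every power of `x`.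
Multiplication by `ξ3` is `F2`, and multiplication by `ξ2` is `-F12 - (1/2) F2 ∘ x`. Hence the
polynomials `f` with `f x^a ∈ p` for all `a` form a subspace containing `1` and stable under
multiplication by `x`, `ξ2`, `ξ3`, which is all of `R`. -/

theorem Nat.forall_of_down_closed_of_up_closed_from {P : ℕ → Prop} {m : ℕ} (hm : P m)
    (down : ∀ a, P (a + 1) → P a) (up : ∀ a, m ≤ a → P a → P (a + 1)) (a : ℕ) : P a := by
  rcases le_total a m with h | h
  · exact Nat.decreasingInduction (fun k _ ih => down k ih) hm h
  · exact Nat.le_induction hm (fun b hb ih => up b hb ih) a h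

theorem MvPolynomial.eq_top_of_one_mem_of_X_mul_mem {σ S : Type*} [CommSemiring S]
    {q : Submodule S (MvPolynomial σ S)} (h1 : 1 ∈ q) (hX : ∀ i, ∀ f ∈ q, X i * f ∈ q) :
    q = ⊤ := by
  refine Submodule.eq_top_iff'.2 fun f => ?_
  induction f using MvPolynomial.induction_on with
  | C a => simpa [smul_eq_C_mul] using q.smul_mem a h1
  | add f g hf hg => exact q.add_mem hf hg
  | mul_X f i hf => simpa [mul_comm] using hX i f hf

theorem E1_X_zero_pow_succ (a : ℕ) : E1 (X 0 ^ (a + 1) : R3) = ((a : ℂ) + 1) • X 0 ^ a := by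
  simp [E1, ξ, D, Module.End.mul_apply, smul_eq_C_mul]

theorem F1_X_zero_pow (lam1 : ℂ) (a : ℕ) :
    F1 lam1 (X 0 ^ a : R3) = (lam1 - a) • X 0 ^ (a + 1) := by
  cases a <;> simp [F1, ξ, D, Module.End.mul_apply, smul_eq_C_mul] <;> ring

theorem F2_apply (v : R3) : F2 v = X 2 * v := rfl

theorem X_one_mul_eq (v : R3) : X 1 * v = -F12 v - (1 / 2 : ℂ) • F2 (X 0 * v) := by
  simp only [F12, F2, ξ, LinearMap.sub_apply, LinearMap.neg_apply, LinearMap.smul_apply,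
    Module.End.mul_apply, LinearMap.mulLeft_apply]
  rw [mul_left_comm]
  abel

theorem X_zero_pow_mem {n : ℕ} {p : Submodule ℂ R3} (hn : (X 0 ^ (n + 1) : R3) ∈ p)
    (hE1 : ∀ v ∈ p, E1 v ∈ p) (hF1 : ∀ v ∈ p, F1 (n : ℂ) v ∈ p) (a : ℕ) :
    (X 0 ^ a : R3) ∈ p := by
  refine Nat.forall_of_down_closed_of_up_closed_from (P := fun a => (X 0 ^ a : R3) ∈ p) hn
    (fun a ha => ?_) (fun a ha h => ?_) a
  · have := hE1 _ ha
    rwa [E1_X_zero_pow_succ, p.smul_mem_iff (Nat.cast_add_one_ne_zero a)] at this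
  · have hna : (n : ℂ) - a ≠ 0 := sub_ne_zero.2 (by exact_mod_cast (Nat.lt_of_succ_le ha).ne)
    have := hF1 _ h
    rwa [F1_X_zero_pow, p.smul_mem_iff hna] at this

theorem eq_top_of_X_zero_pow_mem {p : Submodule ℂ R3} (hx : ∀ a, (X 0 ^ a : R3) ∈ p)
    (hF2 : ∀ v ∈ p, F2 v ∈ p) (hF12 : ∀ v ∈ p, F12 v ∈ p) : p = ⊤ := by
  let q : Submodule ℂ R3 := ⨅ a : ℕ, p.comap (LinearMap.mulRight ℂ (X 0 ^ a))
  have mem_q {f : R3} : f ∈ q ↔ ∀ a, f * X 0 ^ a ∈ p := by simp [q]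
  have hX0 (f : R3) (hf : f ∈ q) : X 0 * f ∈ q := mem_q.2 fun a => by
    simpa [pow_succ, mul_assoc, mul_comm, mul_left_comm] using mem_q.1 hf (a + 1)
  have hX2 (f : R3) (hf : f ∈ q) : X 2 * f ∈ q := mem_q.2 fun a => by
    simpa [F2_apply, mul_assoc] using hF2 _ (mem_q.1 hf a)
  have hX1 (f : R3) (hf : f ∈ q) : X 1 * f ∈ q := mem_q.2 fun a => by
    rw [mul_assoc, X_one_mul_eq, ← mul_assoc]
    exact p.sub_mem (p.neg_mem (hF12 _ (mem_q.1 hf a)))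
      (p.smul_mem _ (hF2 _ (mem_q.1 (hX0 f hf) a)))
  have hq : q = ⊤ := MvPolynomial.eq_top_of_one_mem_of_X_mul_mem
    (mem_q.2 fun a => by simpa using hx a) (fun i => by fin_cases i <;> assumption)
  refine Submodule.eq_top_iff'.2 fun f => ?_
  simpa using mem_q.1 (hq ▸ Submodule.mem_top : f ∈ q) 0

/-- If `λ1 = n` is a nonnegative integer, the `s1`-twisted Verma module `M^{s1}(λ)` is
generated by the single vector `x^{λ1+1}`: every `ℂ`-subspace of `R = ℂ[x,ξ2,ξ3]`
containing `x^{n+1}` and invariant under the eight operators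
`E1, E2, E12, F1, F2, F12, H1, H2` is all of `R`. -/
theorem s1_twisted_generated_by_xpow (n : ℕ) (lam2 : ℂ) :
    ∀ p : Submodule ℂ R3, (X 0 ^ (n + 1) : R3) ∈ p →
      (∀ v ∈ p, E1 v ∈ p) →
      (∀ v ∈ p, E2 (n : ℂ) lam2 v ∈ p) →
      (∀ v ∈ p, E12 (n : ℂ) lam2 v ∈ p) →
      (∀ v ∈ p, F1 (n : ℂ) v ∈ p) →
      (∀ v ∈ p, F2 v ∈ p) →
      (∀ v ∈ p, F12 v ∈ p) →
      (∀ v ∈ p, H1 (n : ℂ) v ∈ p) →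
      (∀ v ∈ p, H2 lam2 v ∈ p) →
      p = ⊤ := by
  intro p hn hE1 _ _ hF1 hF2 hF12 _ _
  exact eq_top_of_X_zero_pow_mem (X_zero_pow_mem hn hE1 hF1) hF2 hF12
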